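/- arXiv:1212.3872 — 2 statements merged into one kernel-verified Lean document; each statement's English description precedes it below -/
import Mathlib

section
/- Parameterized Deduction Theorem: for positive rationals ε and ε', formulae φ ∈ L⁺ and ψ ∈ L: (1) if ⊢_{ε'+ε} (φ → ψ) and ⊢_{ε'} φ, then ⊢_{ε'+ε} ψ; (2) if ⊢_{ε'+ε} (¬ψ → ¬φ) and ⊢_{ε'} φ, then ⊢_{ε'+ε} ψ. -/
open MeasureTheory Set
open scoped ENNReal NNReal

/-- Formulae of Continuous Markovian Logic (CML):
`φ ::= ⊤ | ¬φ | φ ∧ φ | L_r φ` with `r` a nonnegative rational. -/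
inductive CML : Type
  | top : CML
  | neg : CML → CML
  | and : CML → CML → CML
  | L : NNRat → CML → CML

namespace CML

/-- Derived falsity `⊥ = ¬⊤`. -/
def bot : CML := neg top

/-- Derived disjunction `φ ∨ ψ = ¬(¬φ ∧ ¬ψ)`. -/
def or (φ ψ : CML) : CML := neg (and (neg φ) (neg ψ))

/-- Derived implication `φ → ψ = ¬(φ ∧ ¬ψ)`. -/
def imp (φ ψ : CML) : CML := neg (and φ (neg ψ))

/-- The positive fragment `L⁺`, generated by `ψ ::= ⊤ | ψ∧ψ | ψ∨ψ | L_r ψ`. -/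
inductive Pos : CML → Prop
  | top : Pos top
  | and {φ ψ : CML} : Pos φ → Pos ψ → Pos (and φ ψ)
  | or {φ ψ : CML} : Pos φ → Pos ψ → Pos (or φ ψ)
  | L {φ : CML} (r : NNRat) : Pos φ → Pos (L r φ)

/-- The negative fragment `L⁻ = {¬φ : φ ∈ L⁺}`. -/
def NegF (φ : CML) : Prop := ∃ ψ : CML, Pos ψ ∧ φ = neg ψ

end CML

/-- The ε-satisfiability relation on a continuous Markov kernel with transition function `θ`:
`m ⊨_ε L_r φ` iff `θ(m)(⟦φ⟧_ε) + ε ≥ r`. -/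
def sat {M : Type*} [MeasurableSpace M] (θ : M → Measure M) (ε : NNRat) :
    M → CML → Prop
  | _, CML.top => True
  | m, CML.neg φ => ¬ sat θ ε m φ
  | m, CML.and φ ψ => sat θ ε m φ ∧ sat θ ε m ψ
  | m, CML.L r φ => ((r : ℝ≥0) : ℝ≥0∞) ≤ θ m {n | sat θ ε n φ} + ((ε : ℝ≥0) : ℝ≥0∞)

/-- A set `C` is `R`-closed iff `C^R ⊆ C`, where `C^R = {x | ∃ c ∈ C, (c,x) ∈ R}`. -/
def closR {M : Type*} (R : M → M → Prop) (C : Set M) : Set M := {x | ∃ c ∈ C, R c x}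

def RClosed {M : Type*} (R : M → M → Prop) (C : Set M) : Prop := closR R C ⊆ C

/-- `R` is a stochastic bisimulation: related states assign equal measure to every
measurable `R`-closed set. -/
def IsBisim {M : Type*} [MeasurableSpace M] (θ : M → Measure M) (R : M → M → Prop) : Prop :=
  ∀ m n : M, R m n → ∀ C : Set M, MeasurableSet C → RClosed R C → θ m C = θ n C

/-- Stochastic bisimilarity: being related by some stochastic bisimulation. -/
def Bisim {M : Type*} [MeasurableSpace M] (θ : M → Measure M) (m n : M) : Prop :=
  ∃ R : M → M → Prop, IsBisim θ R ∧ R m n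
/-- The encoding `⟨·⟩_ε`, lowering all modal indices: `⟨L_r φ⟩_ε = L_{r ∸ ε} ⟨φ⟩_ε`. -/
def lowE (ε : NNRat) : CML → CML
  | CML.top => CML.top
  | CML.neg φ => CML.neg (lowE ε φ)
  | CML.and φ ψ => CML.and (lowE ε φ) (lowE ε ψ)
  | CML.L r φ => CML.L (r - ε) (lowE ε φ)

/-- The encoding `⟨·⟩^ε`, raising all modal indices: `⟨L_r φ⟩^ε = L_{r+ε} ⟨φ⟩^ε`. -/
def upE (ε : NNRat) : CML → CML
  | CML.top => CML.top
  | CML.neg φ => CML.neg (upE ε φ)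
  | CML.and φ ψ => CML.and (upE ε φ) (upE ε ψ)
  | CML.L r φ => CML.L (r + ε) (upE ε φ)

/-- Every modal index `r` occurring in a subformula `L_r ψ` of `φ` satisfies `r ≥ ε`. -/
def IndGe (ε : NNRat) : CML → Prop
  | CML.top => True
  | CML.neg φ => IndGe ε φ
  | CML.and φ ψ => IndGe ε φ ∧ IndGe ε ψ
  | CML.L r φ => ε ≤ r ∧ IndGe ε φ

/-- Boolean evaluation of a formula, treating modal formulae `L_r φ` as atoms. -/
def evalB (v : CML → Bool) : CML → Bool
  | CML.top => true
  | CML.neg φ => !(evalB v φ)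
  | CML.and φ ψ => evalB v φ && evalB v ψ
  | CML.L r φ => v (CML.L r φ)

/-- Propositional tautologies (with modal subformulae regarded as atoms). -/
def Taut (φ : CML) : Prop := ∀ v : CML → Bool, evalB v φ = true

/-- The ε-provability relation `⊢_ε`: classical propositional logic together with
(A1)-(A4), (R1)-(R3). -/
inductive Prov (ε : NNRat) : CML → Prop
  | taut {φ : CML} : Taut φ → Prov ε φ
  | mp {φ ψ : CML} : Prov ε (φ.imp ψ) → Prov ε φ → Prov ε ψ
  | a1 (φ : CML) : Prov ε (CML.L ε φ)
  | a2 (r s : NNRat) (φ : CML) : Prov ε ((CML.L (r + s) φ).imp (CML.L r φ))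
  | a3 (r s : NNRat) (φ ψ : CML) :
      Prov ε (((CML.L r (φ.and ψ)).and (CML.L s (φ.and ψ.neg))).imp (CML.L (r + s - ε) φ))
  | a4 (r s : NNRat) (φ ψ : CML) :
      Prov ε ((((CML.L r (φ.and ψ)).neg).and ((CML.L s (φ.and ψ.neg)).neg)).imp
        ((CML.L (r + s - ε) φ).neg))
  | r1 {φ ψ : CML} (r : NNRat) : Prov ε (φ.imp ψ) → Prov ε ((CML.L r φ).imp (CML.L r ψ))
  | r2 {φ : CML} (s : NNRat) : (∀ r : NNRat, r < s → Prov ε (CML.L r φ)) →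
      Prov ε (CML.L s φ)
  | r3 {φ : CML} (s : NNRat) : (∀ r : NNRat, r > s → Prov ε (CML.L r φ)) →
      Prov ε CML.bot

/-- ε-validity: `φ` holds at every state of every continuous Markov kernel, i.e. of every
analytic Borel space with a measurable transition function assigning finite measures. -/
def Valid (ε : NNRat) (φ : CML) : Prop :=
  ∀ (M : Type) [TopologicalSpace M] [MeasurableSpace M] [BorelSpace M],
    AnalyticSet (univ : Set M) →
      ∀ θ : M → Measure M, Measurable θ → (∀ m : M, θ m univ ≠ ∞) →
        ∀ m : M, sat θ ε m φ

/-- `R` is closed under stochastic bisimilarity. -/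
def ClosedUnderBisim {M : Type*} [MeasurableSpace M] (θ : M → Measure M)
    (R : M → M → Prop) : Prop :=
  ∀ m n m' n' : M, R m n → Bisim θ m m' → Bisim θ n n' → R m' n'

/-- `R` is an ε-behavioral order: it is closed under bisimilarity and whenever `m R n`,
`θ(n)(C) − θ(m)(C^R) ≤ ε` for every `C` in the bisimulation generator
`G_M = {⟦φ⟧_0 : φ ∈ L⁺}`. -/
def IsEpsOrder {M : Type*} [MeasurableSpace M] (θ : M → Measure M) (ε : NNRat)
    (R : M → M → Prop) : Prop :=
  ClosedUnderBisim θ R ∧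
    ∀ m n : M, R m n → ∀ φ : CML, CML.Pos φ →
      θ n {x | sat θ 0 x φ} ≤ θ m (closR R {x | sat θ 0 x φ}) + ((ε : ℝ≥0) : ℝ≥0∞)

/-- `m ≺_ε n`: the largest ε-behavioral order. -/
def prec {M : Type*} [MeasurableSpace M] (θ : M → Measure M) (ε : NNRat) (m n : M) : Prop :=
  ∃ R : M → M → Prop, IsEpsOrder θ ε R ∧ R m n

/-- `R` is an essential ε-behavioral order: it is closed under bisimilarity and whenever
`m R n`, `θ(n)(C) − θ(m)(C^R) ∈ [0, ε]` for every `C` in the extended bisimulation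
generator `\overline{G_M} = {⟦φ⟧_0 : φ ∈ L}`. -/
def IsEssEpsOrder {M : Type*} [MeasurableSpace M] (θ : M → Measure M) (ε : NNRat)
    (R : M → M → Prop) : Prop :=
  ClosedUnderBisim θ R ∧
    ∀ m n : M, R m n → ∀ φ : CML,
      θ m (closR R {x | sat θ 0 x φ}) ≤ θ n {x | sat θ 0 x φ} ∧
      θ n {x | sat θ 0 x φ} ≤ θ m (closR R {x | sat θ 0 x φ}) + ((ε : ℝ≥0) : ℝ≥0∞)

/-- `m ≺⁺_ε n`: the largest essential ε-behavioral order. -/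
def precP {M : Type*} [MeasurableSpace M] (θ : M → Measure M) (ε : NNRat) (m n : M) : Prop :=
  ∃ R : M → M → Prop, IsEssEpsOrder θ ε R ∧ R m n

/-- The encoding `|·|_ε` on formulae in disjunctive normal form (with `L_r φ` treated as
atoms): `DNFEnc ε φ φ'` means `φ` is in disjunctive normal form and `φ' = |φ|_ε`. -/
inductive DNFEnc (ε : NNRat) : CML → CML → Prop
  | top : DNFEnc ε CML.top CML.top
  | bot : DNFEnc ε CML.bot CML.bot
  | L {ψ ψ' : CML} (r : NNRat) : DNFEnc ε ψ ψ' → DNFEnc ε (CML.L r ψ) (CML.L r ψ')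
  | negL {ψ ψ' : CML} (r : NNRat) :
      DNFEnc ε ψ ψ' → DNFEnc ε ((CML.L r ψ).neg) ((CML.L (r + ε) ψ').neg)
  | and {φ φ' χ χ' : CML} :
      DNFEnc ε φ φ' → DNFEnc ε χ χ' → DNFEnc ε (φ.and χ) (φ'.and χ')
  | or {φ φ' χ χ' : CML} :
      DNFEnc ε φ φ' → DNFEnc ε χ χ' → DNFEnc ε (CML.or φ χ) (CML.or φ' χ')

/-- The behavioural distance `d(m,n) = inf {ε | m ≺_ε n and n ≺_ε m}`. -/
noncomputable def bdist {M : Type*} [MeasurableSpace M] (θ : M → Measure M)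
    (m n : M) : ℝ≥0 :=
  sInf {x : ℝ≥0 | ∃ ε : NNRat, x = (ε : ℝ≥0) ∧ prec θ ε m n ∧ prec θ ε n m}

/-!
Raising every modal index by `ε` (the encoding `upE ε`) maps `⊢_{ε'}`-derivations to
`⊢_{ε'+ε}`-derivations: tautologies stay tautologies, and in (A3)/(A4) the extra `ε` on both
premises is absorbed by the extra `ε` in the parameter. For a positive formula, `upE ε φ → φ`
is provable by (A2) and (R1), because `L_r` is monotone both in its index and in its
argument. Hence `⊢_{ε'} φ` gives `⊢_{ε'+ε} φ` for `φ ∈ L⁺`, and both parts follow by modus ponens.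
-/

theorem evalB_upE (ε : NNRat) (v : CML → Bool) (χ : CML) :
    evalB v (upE ε χ) = evalB (v ∘ upE ε) χ := by
  induction χ with
  | top => rfl
  | neg φ ih => simp only [upE, evalB, ih]
  | and φ ψ ihφ ihψ => simp only [upE, evalB, ihφ, ihψ]
  | L r φ => rfl

theorem Taut.upE {χ : CML} (ε : NNRat) (h : Taut χ) : Taut (upE ε χ) :=
  fun v => (evalB_upE ε v χ).trans (h _)

theorem NNRat.add_add_tsub_add_right (r s ε ε' : NNRat) :
    r + ε + (s + ε) - (ε' + ε) = r + s + ε - ε' := by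
  rw [add_add_add_comm, ← add_assoc, add_tsub_add_eq_tsub_right]

namespace Prov

open CML

variable {δ : NNRat} {A B C D : CML}

theorem imp_intro (h : Prov δ B) : Prov δ (A.imp B) := by
  refine (taut fun v => ?_).mp h
  simp only [CML.imp, evalB]
  cases evalB v A <;> cases evalB v B <;> rfl

theorem imp_refl (A : CML) : Prov δ (A.imp A) := by
  refine taut fun v => ?_
  simp only [CML.imp, evalB]
  cases evalB v A <;> rfl

theorem imp_trans (h₁ : Prov δ (A.imp B)) (h₂ : Prov δ (B.imp C)) : Prov δ (A.imp C) := by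
  refine ((taut fun v => ?_).mp h₁).mp h₂
  simp only [CML.imp, evalB]
  cases evalB v A <;> cases evalB v B <;> cases evalB v C <;> rfl

theorem neg_imp_neg (h : Prov δ (A.imp B)) : Prov δ (B.neg.imp A.neg) := by
  refine (taut fun v => ?_).mp h
  simp only [CML.imp, evalB]
  cases evalB v A <;> cases evalB v B <;> rfl

theorem imp_of_neg_imp_neg (h : Prov δ (B.neg.imp A.neg)) : Prov δ (A.imp B) := by
  refine (taut fun v => ?_).mp h
  simp only [CML.imp, evalB]
  cases evalB v A <;> cases evalB v B <;> rfl

theorem and_imp_and (h₁ : Prov δ (A.imp B)) (h₂ : Prov δ (C.imp D)) :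
    Prov δ ((A.and C).imp (B.and D)) := by
  refine ((taut fun v => ?_).mp h₁).mp h₂
  simp only [CML.imp, evalB]
  cases evalB v A <;> cases evalB v B <;> cases evalB v C <;> cases evalB v D <;> rfl

theorem or_imp_or (h₁ : Prov δ (A.imp B)) (h₂ : Prov δ (C.imp D)) :
    Prov δ ((A.or C).imp (B.or D)) := by
  refine ((taut fun v => ?_).mp h₁).mp h₂
  simp only [CML.imp, CML.or, evalB]
  cases evalB v A <;> cases evalB v B <;> cases evalB v C <;> cases evalB v D <;> rfl

theorem L_imp_L_of_le {r s : NNRat} (h : s ≤ r) (φ : CML) : Prov δ ((L r φ).imp (L s φ)) := by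
  simpa only [add_tsub_cancel_of_le h] using a2 (ε := δ) s (r - s) φ

theorem L_of_le {r : NNRat} (h : r ≤ δ) (φ : CML) : Prov δ (L r φ) :=
  (L_imp_L_of_le h φ).mp (a1 φ)

variable {ε ε' : NNRat}

theorem a3_upE (r s : NNRat) (φ ψ : CML) :
    Prov (ε' + ε) (((L (r + ε) (φ.and ψ)).and (L (s + ε) (φ.and ψ.neg))).imp
      (L (r + s - ε' + ε) φ)) := by
  have h := a3 (ε := ε' + ε) (r + ε) (s + ε) φ ψ
  rw [NNRat.add_add_tsub_add_right] at h
  rcases le_or_gt ε' (r + s) with hle | hlt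
  · rwa [tsub_add_eq_add_tsub hle]
  -- below `ε'` the truncated index is `0`, and `L_ε` is an instance of (A1) up to (A2)
  · rw [tsub_eq_zero_of_le hlt.le, zero_add]
    exact imp_intro (L_of_le le_add_self φ)

theorem a4_upE (r s : NNRat) (φ ψ : CML) :
    Prov (ε' + ε) ((((L (r + ε) (φ.and ψ)).neg).and ((L (s + ε) (φ.and ψ.neg)).neg)).imp
      ((L (r + s - ε' + ε) φ).neg)) := by
  have h := a4 (ε := ε' + ε) (r + ε) (s + ε) φ ψ
  rw [NNRat.add_add_tsub_add_right] at h
  exact imp_trans h (neg_imp_neg (L_imp_L_of_le add_tsub_le_tsub_add φ))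

theorem upE_of_prov {χ : CML} (h : Prov ε' χ) : Prov (ε' + ε) (upE ε χ) := by
  induction h with
  | taut ht => exact taut (ht.upE ε)
  | mp _ _ ih₁ ih₂ => exact ih₁.mp ih₂
  | a1 φ => exact a1 (upE ε φ)
  | a2 r s φ => exact L_imp_L_of_le (by rw [add_right_comm]; exact le_self_add) _
  | a3 r s φ ψ => exact a3_upE r s (upE ε φ) (upE ε ψ)
  | a4 r s φ ψ => exact a4_upE r s (upE ε φ) (upE ε ψ)
  | r1 r _ ih => exact r1 (r + ε) ih
  | @r2 φ s _ ih =>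
    refine r2 (s + ε) fun r hr => ?_
    rcases le_or_gt ε r with hle | hlt
    · simpa only [upE, tsub_add_cancel_of_le hle] using ih (r - ε) ((tsub_lt_iff_right hle).2 hr)
    · exact L_of_le (hlt.le.trans le_add_self) _
  | @r3 φ s _ ih =>
    refine r3 (φ := upE ε φ) (s + ε) fun r hr => ?_
    have hle : ε ≤ r := le_add_self.trans hr.le
    simpa only [upE, tsub_add_cancel_of_le hle] using ih (r - ε) (lt_tsub_iff_right.2 hr)

theorem upE_imp_of_pos {φ : CML} (hφ : Pos φ) : Prov δ ((upE ε φ).imp φ) := by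
  induction hφ with
  | top => exact imp_refl _
  | and _ _ ih₁ ih₂ => exact and_imp_and ih₁ ih₂
  | or _ _ ih₁ ih₂ => exact or_imp_or ih₁ ih₂
  | L r _ ih => exact imp_trans (L_imp_L_of_le le_self_add _) (r1 r ih)

theorem mono_of_pos {δ₁ δ₂ : NNRat} {φ : CML} (hφ : Pos φ) (hle : δ₁ ≤ δ₂)
    (h : Prov δ₁ φ) : Prov δ₂ φ := by
  obtain ⟨ε, rfl⟩ := exists_add_of_le hle
  exact (upE_imp_of_pos hφ).mp (upE_of_prov (ε := ε) h)

end Prov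

theorem param_deduction_general (ε ε' : NNRat)
    (φ : CML) (hφ : CML.Pos φ) (ψ : CML) :
    (Prov (ε' + ε) (φ.imp ψ) → Prov ε' φ → Prov (ε' + ε) ψ) ∧
    (Prov (ε' + ε) ((ψ.neg).imp (φ.neg)) → Prov ε' φ → Prov (ε' + ε) ψ) := by
  have hφ' : Prov ε' φ → Prov (ε' + ε) φ := Prov.mono_of_pos hφ le_self_add
  exact ⟨fun himp h => himp.mp (hφ' h),
    fun hcontra h => (Prov.imp_of_neg_imp_neg hcontra).mp (hφ' h)⟩

/-- parameterized deduction theorem. -/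
theorem param_deduction (ε ε' : NNRat) (hε : 0 < ε) (hε' : 0 < ε')
    (φ : CML) (hφ : CML.Pos φ) (ψ : CML) :
    (Prov (ε' + ε) (φ.imp ψ) → Prov ε' φ → Prov (ε' + ε) ψ) ∧
    (Prov (ε' + ε) ((ψ.neg).imp (φ.neg)) → Prov ε' φ → Prov (ε' + ε) ψ) :=
  param_deduction_general ε ε' φ hφ ψ
end

section
/- Parameterized characterization of bisimulation: for a continuous Markov kernel (M, Σ, θ), states m, m' ∈ M, and any rational ε ≥ 0, the following are equivalent: (1) m ∼ m'; (2) for every φ ∈ L, m ⊨_ε φ iff m' ⊨_ε φ; (3) for every φ ∈ L⁺, m ⊨_ε φ iff m' ⊨_ε φ. -/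
open MeasureTheory Set
open scoped ENNReal NNReal

/-!
Bisimilar states agree on every formula: by induction on `φ`, each satisfaction set `⟦φ⟧_ε` is
measurable and closed under bisimilarity, so bisimilar states give it the same measure.

Conversely, if `m` and `m'` agree on every positive formula, they agree on `L_r φ` for all
rationals `r`, which forces `θ m ⟦φ⟧_ε = θ m' ⟦φ⟧_ε` for positive `φ`. These sets form a countable
π-system containing `univ`, so the finite measures `θ m` and `θ m'` agree on the σ-algebra it
generates. Because the state space is analytic, that σ-algebra contains every Borel set closed
under L⁺-equivalence: such a set and its complement have disjoint analytic images under the coding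
map `x ↦ (x ∈ ⟦φ⟧_ε)_φ` into a Cantor space, and Lusin's separation theorem separates them by a
Borel set. Hence L⁺-equivalence is itself a bisimulation.
-/

open MeasurableSpace

namespace CML

def toNat : CML → ℕ
  | top => 0
  | neg φ => Encodable.encode (Sum.inl φ.toNat : ℕ ⊕ (ℕ × ℕ) ⊕ (ℚ≥0 × ℕ)) + 1
  | and φ ψ =>
    Encodable.encode (Sum.inr (Sum.inl (φ.toNat, ψ.toNat)) : ℕ ⊕ (ℕ × ℕ) ⊕ (ℚ≥0 × ℕ)) + 1
  | L r φ => Encodable.encode (Sum.inr (Sum.inr (r, φ.toNat)) : ℕ ⊕ (ℕ × ℕ) ⊕ (ℚ≥0 × ℕ)) + 1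

theorem toNat_injective : Function.Injective toNat := by
  intro φ ψ h
  induction φ generalizing ψ <;> cases ψ <;>
    simp only [toNat, Nat.add_right_cancel_iff, Encodable.encode_inj, Sum.inl.injEq, Sum.inr.injEq,
      Prod.mk.injEq, reduceCtorEq, Nat.add_one_ne_zero, Nat.zero_ne_add_one] at h ⊢ <;>
    grind

instance : Countable CML := toNat_injective.countable

end CML

theorem ENNReal.eq_of_forall_nnratCast_le_iff {a b : ℝ≥0∞}
    (h : ∀ q : ℚ≥0, (q : ℝ≥0∞) ≤ a ↔ (q : ℝ≥0∞) ≤ b) : a = b := by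
  have exists_btwn : ∀ {a b : ℝ≥0∞}, a < b → ∃ q : ℚ≥0, a < q ∧ (q : ℝ≥0∞) < b := by
    intro a b hab
    obtain ⟨q, hq, haq, hqb⟩ := ENNReal.lt_iff_exists_rat_btwn.mp hab
    lift q to ℚ≥0 using hq
    rw [Rat.cast_nnratCast, ← map_nnratCast NNReal.toRealHom q, NNReal.coe_toRealHom,
      Real.toNNReal_coe, ENNReal.coe_nnratCast] at haq hqb
    exact ⟨q, haq, hqb⟩
  by_contra hne
  rcases lt_or_gt_of_ne hne with hab | hba
  · obtain ⟨q, haq, hqb⟩ := exists_btwn hab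
    exact haq.not_ge ((h q).mpr hqb.le)
  · obtain ⟨q, hbq, hqa⟩ := exists_btwn hba
    exact hbq.not_ge ((h q).mp hqa.le)

theorem MeasurableSet.analyticSet_image_of_analyticSet_univ {X Y : Type*} [TopologicalSpace X]
    [MeasurableSpace X] [BorelSpace X] [TopologicalSpace Y] [MeasurableSpace Y]
    [OpensMeasurableSpace Y] [SecondCountableTopology Y] (hX : AnalyticSet (univ : Set X))
    {f : X → Y} (hf : Measurable f) {s : Set X} (hs : MeasurableSet s) : AnalyticSet (f '' s) := by
  obtain ⟨β, _, _, g, hg, hrange⟩ := analyticSet_iff_exists_polishSpace_range.mp hX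
  borelize β
  rw [← image_preimage_eq s (range_eq_univ.mp hrange), ← image_comp]
  exact (hg.measurable hs).analyticSet_image (hf.comp hg.measurable)

theorem measurableSet_comap_of_saturated {X Y : Type*} [TopologicalSpace X] [MeasurableSpace X]
    [BorelSpace X] [TopologicalSpace Y] [T2Space Y] [MeasurableSpace Y] [OpensMeasurableSpace Y]
    [SecondCountableTopology Y] (hX : AnalyticSet (univ : Set X)) {f : X → Y} (hf : Measurable f)
    {C : Set X} (hC : MeasurableSet C) (hsat : ∀ x y, f x = f y → x ∈ C → y ∈ C) :
    MeasurableSet[MeasurableSpace.comap f ‹_›] C := by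
  have hdisj : Disjoint (f '' C) (f '' Cᶜ) := by
    rw [disjoint_left]
    rintro _ ⟨x, hx, rfl⟩ ⟨y, hy, hyx⟩
    exact hy (hsat x y hyx.symm hx)
  obtain ⟨u, hCu, hu_disj, hu⟩ :=
    (hC.analyticSet_image_of_analyticSet_univ hX hf).measurablySeparable
      (hC.compl.analyticSet_image_of_analyticSet_univ hX hf) hdisj
  refine ⟨u, hu, subset_antisymm (fun x hx => ?_) (image_subset_iff.mp hCu)⟩
  by_contra hxC
  exact disjoint_left.mp hu_disj ⟨x, hxC, rfl⟩ hx

theorem measurableSet_generateFrom_of_saturated {X ι : Type*} [TopologicalSpace X]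
    [MeasurableSpace X] [BorelSpace X] [Countable ι] (hX : AnalyticSet (univ : Set X))
    {S : ι → Set X} (hS : ∀ i, MeasurableSet (S i)) {C : Set X} (hC : MeasurableSet C)
    (hsat : ∀ x y, (∀ i, x ∈ S i ↔ y ∈ S i) → x ∈ C → y ∈ C) :
    MeasurableSet[generateFrom (range S)] C := by
  classical
  let f : X → ι → Bool := fun x i => decide (x ∈ S i)
  have hf_gen : Measurable[generateFrom (range S)] f :=
    @measurable_pi_lambda _ _ _ (generateFrom (range S)) _ f fun i =>
      measurable_to_bool <| by
        convert measurableSet_generateFrom (mem_range_self i)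
        ext; simp [f]
  have hf : Measurable f :=
    hf_gen.mono (generateFrom_le (forall_mem_range.mpr hS)) le_rfl
  refine hf_gen.comap_le _ (measurableSet_comap_of_saturated hX hf hC fun x y hxy => ?_)
  exact hsat x y fun i => by simpa [f] using congrFun hxy i

section Logic

variable {M : Type*} [MeasurableSpace M] {θ : M → Measure M} {ε : ℚ≥0}

theorem measurableSet_sat (hθ : Measurable θ) : ∀ φ : CML, MeasurableSet {x | sat θ ε x φ}
  | .top => MeasurableSet.univ
  | .neg φ => (measurableSet_sat hθ φ).compl
  | .and φ ψ => (measurableSet_sat hθ φ).inter (measurableSet_sat hθ ψ)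
  | .L _ φ => measurableSet_le measurable_const
      (((Measure.measurable_coe (measurableSet_sat hθ φ)).comp hθ).add_const _)

theorem isBisim_bisim (θ : M → Measure M) : IsBisim θ (Bisim θ) := by
  rintro m n ⟨R, hR, hmn⟩ C hC hCl
  exact hR m n hmn C hC fun x ⟨c, hc, hcx⟩ => hCl ⟨c, hc, R, hR, hcx⟩

theorem Bisim.sat_iff (hθ : Measurable θ) {x y : M} (h : Bisim θ x y) (φ : CML) :
    sat θ ε x φ ↔ sat θ ε y φ := by
  induction φ generalizing x y with
  | top => exact Iff.rfl
  | neg φ ih => exact (ih h).not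
  | and φ ψ ihφ ihψ => exact and_congr (ihφ h) (ihψ h)
  | L r φ ih =>
    have hsat_closed : RClosed (Bisim θ) {z | sat θ ε z φ} :=
      fun z ⟨c, hc, hcz⟩ => (ih hcz).mp hc
    show _ ≤ _ + _ ↔ _ ≤ _ + _
    rw [isBisim_bisim θ x y h _ (measurableSet_sat hθ φ) hsat_closed]

def PosEquiv (θ : M → Measure M) (ε : ℚ≥0) (x y : M) : Prop :=
  ∀ φ : CML, CML.Pos φ → (sat θ ε x φ ↔ sat θ ε y φ)

theorem PosEquiv.measure_eq {x y : M} (h : PosEquiv θ ε x y) {φ : CML} (hφ : CML.Pos φ) :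
    θ x {z | sat θ ε z φ} = θ y {z | sat θ ε z φ} :=
  (ENNReal.add_left_inj ENNReal.coe_ne_top).mp <|
    ENNReal.eq_of_forall_nnratCast_le_iff fun r => h (CML.L r φ) (hφ.L r)

theorem isBisim_posEquiv [TopologicalSpace M] [BorelSpace M] (hA : AnalyticSet (univ : Set M))
    (hθ : Measurable θ) (hfin : ∀ m : M, θ m univ ≠ ∞) : IsBisim θ (PosEquiv θ ε) := by
  intro x y hxy C hC hCl
  let S : {φ // CML.Pos φ} → Set M := fun φ => {z | sat θ ε z φ}
  have hS : ∀ φ, MeasurableSet (S φ) := fun φ => measurableSet_sat hθ φ.1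
  have hpi : IsPiSystem (range S) := by
    rintro _ ⟨φ, rfl⟩ _ ⟨ψ, rfl⟩ -
    exact ⟨⟨_, φ.2.and ψ.2⟩, rfl⟩
  have hC_gen : MeasurableSet[generateFrom (range S)] C :=
    measurableSet_generateFrom_of_saturated hA hS hC fun a b hab ha =>
      hCl ⟨a, ha, fun φ hφ => hab ⟨φ, hφ⟩⟩
  have : IsFiniteMeasure (θ x) := ⟨(hfin x).lt_top⟩
  exact ext_on_measurableSpace_of_generate_finite _ _
    (forall_mem_range.mpr fun φ => hxy.measure_eq φ.2)
    (generateFrom_le (forall_mem_range.mpr hS)) rfl hpi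
    (hxy.measure_eq CML.Pos.top) hC_gen

end Logic

/-- parameterized characterization of bisimulation: for any ε ≥ 0,
m ∼ m' iff m and m' ε-satisfy the same formulae of L iff the same formulae of L⁺. -/
theorem bisim_param_charact {M : Type*} [TopologicalSpace M] [MeasurableSpace M] [BorelSpace M]
    (hA : AnalyticSet (univ : Set M))
    (θ : M → Measure M) (hθ : Measurable θ) (hfin : ∀ m : M, θ m univ ≠ ∞)
    (m m' : M) (ε : NNRat) :
    (Bisim θ m m' ↔ ∀ φ : CML, (sat θ ε m φ ↔ sat θ ε m' φ)) ∧
    (Bisim θ m m' ↔ ∀ φ : CML, CML.Pos φ → (sat θ ε m φ ↔ sat θ ε m' φ)) := by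
  have complete (h : PosEquiv θ ε m m') : Bisim θ m m' := ⟨_, isBisim_posEquiv hA hθ hfin, h⟩
  exact ⟨⟨fun h => h.sat_iff hθ, fun h => complete fun φ _ => h φ⟩,
    ⟨fun h φ _ => h.sat_iff hθ φ, complete⟩⟩
end
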